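/- Consider the SEM on eight variables ordered (y6, l1, l2, y1, y2, y3, y4, y5) with coefficient matrix Λ whose only nonzero entries are Λ[y6,l1] = γ₁, Λ[y6,l2] = γ₂, Λ[l1,y1] = 1, Λ[l1,y2] = λ₂, Λ[l1,y3] = λ₁₃, Λ[l2,y3] = λ₂₃, Λ[l2,y4] = 1, Λ[l2,y5] = λ₅, and with error covariance matrix Φ symmetric positive definite whose off-diagonal entries are all zero except possibly Φ[y1,y2] = Φ[y2,y1]. Let Σ = (I − Λ)⁻ᵀ Φ (I − Λ)⁻¹ be the implied covariance matrix. Then for every such choice of the parameters γ₁, γ₂, λ₂, λ₁₃, λ₂₃, λ₅ and Φ: Σ[y6,y6]·Σ[y5,y3] − Σ[y5,y6]·Σ[y6,y3] = λ₂₃ · (Σ[y6,y6]·Σ[y5,y4] − Σ[y5,y6]·Σ[y6,y4]). In particular, λ₂₃ equals the ratio of the conditional covariances of (y5, y3) and (y5, y4) given y6 whenever the latter is nonzero. -/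

import Mathlib

/-!
With `B = (1 - Λ)⁻¹` one has `Σ (1 - Λ) = Bᵀ Φ`, so each column of `Σ` obeys the structural
equation of its variable, `Σ[a, v] = ∑ u, Λ[u, v] Σ[a, u] + B[v, a] Φ[v, v]`, when the error of `v`
is uncorrelated with the other errors. The covariances partialled on `c` obey the same equation as
soon as `v` is an ancestor of neither `a` nor `c`, i.e. `B[v, a] = B[v, c] = 0`. Partialling on
`y6`, the equations of `y3`, `y4` and `l1` then give
`pc(y5, y3) = λ₁₃ pc(y5, l1) + λ₂₃ pc(y5, l2)`, `pc(y5, y4) = pc(y5, l2)` and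
`pc(y5, l1) = γ₁ pc(y5, y6) = 0`. The ancestry conditions hold because `B` is block triangular
for any topological order of the path diagram.
-/

open Matrix

namespace Matrix

variable {n α R : Type*} [LinearOrder α]

def IsStrictBlockTriangular [Zero R] (M : Matrix n n R) (b : n → α) : Prop :=
  ∀ ⦃i j⦄, b j ≤ b i → M i j = 0

theorem IsStrictBlockTriangular.blockTriangular [Zero R] {M : Matrix n n R} {b : n → α}
    (hM : M.IsStrictBlockTriangular b) : M.BlockTriangular b :=
  fun _ _ h => hM h.le

variable [Fintype n] [DecidableEq n] [CommRing R] {M : Matrix n n R} {b : n → α}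

theorem IsStrictBlockTriangular.det_one_sub (hM : M.IsStrictBlockTriangular b) :
    (1 - M).det = 1 := by
  rw [(blockTriangular_one.sub hM.blockTriangular).det]
  refine Finset.prod_eq_one fun k _ => ?_
  have hblock : (1 - M).toSquareBlock b k = 1 := by
    ext ⟨i, hi⟩ ⟨j, hj⟩
    simp [toSquareBlock_def, one_apply, hM (hj.trans hi.symm).le]
  rw [hblock, det_one]

theorem IsStrictBlockTriangular.blockTriangular_inv_one_sub
    (hM : M.IsStrictBlockTriangular b) : ((1 - M)⁻¹).BlockTriangular b := by
  have := invertibleOfIsUnitDet (1 - M) (by rw [hM.det_one_sub]; exact isUnit_one)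
  exact blockTriangular_inv_of_blockTriangular (blockTriangular_one.sub hM.blockTriangular)

end Matrix

section StructuralEquationModel

variable {R n : Type*}

noncomputable def impliedCov [Fintype n] [DecidableEq n] [CommRing R] (Λ Φ : Matrix n n R) :
    Matrix n n R :=
  ((1 - Λ)⁻¹)ᵀ * Φ * (1 - Λ)⁻¹

/-- `S c c` times the covariance of `a` and `b` conditional on `c`; it needs no division. -/
def partialCov [CommRing R] (S : Matrix n n R) (c a b : n) : R :=
  S c c * S a b - S a c * S c b

def condCov [Field R] (S : Matrix n n R) (c a b : n) : R :=
  S a b - S a c * S c b / S c c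

theorem partialCov_self_right [CommRing R] (S : Matrix n n R) (c a : n) :
    partialCov S c a c = 0 := by
  rw [partialCov]; ring

theorem condCov_eq_partialCov_div [Field R] {S : Matrix n n R} {c : n} (hc : S c c ≠ 0)
    (a b : n) : condCov S c a b = partialCov S c a b / S c c := by
  rw [condCov, partialCov]; field_simp

theorem eq_div_condCov_of_partialCov_eq [Field R] {S : Matrix n n R} {c a b b' : n} {t : R}
    (hc : S c c ≠ 0) (h : partialCov S c a b = t * partialCov S c a b')
    (hb' : condCov S c a b' ≠ 0) : t = condCov S c a b / condCov S c a b' := by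
  rw [eq_div_iff hb', condCov_eq_partialCov_div hc, condCov_eq_partialCov_div hc, h,
    mul_div_assoc]

variable [Fintype n] [DecidableEq n]

theorem impliedCov_posDef {Λ Φ : Matrix n n ℝ} (hΦ : Φ.PosDef) (hΛ : IsUnit (1 - Λ).det) :
    (impliedCov Λ Φ).PosDef := by
  have hB : IsUnit (1 - Λ)⁻¹ := (isUnit_iff_isUnit_det _).mpr (isUnit_nonsing_inv_det_iff.mpr hΛ)
  simpa [impliedCov] using hΦ.conjTranspose_mul_mul_same (mulVec_injective_of_isUnit hB)

variable [CommRing R] {Λ Φ : Matrix n n R}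

theorem impliedCov_eq_mul_add (hΛ : IsUnit (1 - Λ).det) :
    impliedCov Λ Φ = impliedCov Λ Φ * Λ + ((1 - Λ)⁻¹)ᵀ * Φ := by
  have h : impliedCov Λ Φ * (1 - Λ) = ((1 - Λ)⁻¹)ᵀ * Φ := by
    rw [impliedCov, Matrix.mul_assoc _ (1 - Λ)⁻¹, nonsing_inv_mul _ hΛ, Matrix.mul_one]
  rw [← h, Matrix.mul_sub, Matrix.mul_one, add_sub_cancel]

theorem impliedCov_apply_eq_sum_add (hΛ : IsUnit (1 - Λ).det) {v : n}
    (hΦ : ∀ j, j ≠ v → Φ j v = 0) (a : n) :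
    impliedCov Λ Φ a v = ∑ u, Λ u v * impliedCov Λ Φ a u + (1 - Λ)⁻¹ v a * Φ v v := by
  have hnoise : (((1 - Λ)⁻¹)ᵀ * Φ : Matrix n n R) a v = (1 - Λ)⁻¹ v a * Φ v v := by
    rw [mul_apply, Finset.sum_eq_single v (fun j _ hj => by rw [hΦ j hj, mul_zero]) (by simp),
      transpose_apply]
  conv_lhs => rw [impliedCov_eq_mul_add hΛ, Matrix.add_apply, hnoise, mul_apply]
  simp only [mul_comm (impliedCov Λ Φ a _)]

theorem partialCov_impliedCov_eq_sum (hΛ : IsUnit (1 - Λ).det) {c a v : n}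
    (hΦ : ∀ j, j ≠ v → Φ j v = 0) (ha : (1 - Λ)⁻¹ v a = 0) (hc : (1 - Λ)⁻¹ v c = 0) :
    partialCov (impliedCov Λ Φ) c a v = ∑ u, Λ u v * partialCov (impliedCov Λ Φ) c a u := by
  simp only [partialCov, impliedCov_apply_eq_sum_add hΛ hΦ, ha, hc, zero_mul, add_zero,
    mul_sub, Finset.mul_sum, Finset.sum_sub_distrib]
  congr 1 <;> exact Finset.sum_congr rfl fun u _ => by ring

end StructuralEquationModel

/-- in the SEM on the eight variables
`(y6, l1, l2, y1, y2, y3, y4, y5)` (indices `0,…,7`) with the coefficient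
matrix below and error covariance `Φ` (positive definite, all off-diagonal
entries zero except possibly `Φ[y1,y2] = Φ[y2,y1]`), the implied covariance
matrix `Σ = (I − Λ)⁻ᵀ Φ (I − Λ)⁻¹` satisfies
`Σ[y6,y6]·Σ[y5,y3] − Σ[y5,y6]·Σ[y6,y3] = λ₂₃·(Σ[y6,y6]·Σ[y5,y4] − Σ[y5,y6]·Σ[y6,y4])`;
in particular `λ₂₃` is the ratio of the conditional covariances of `(y5,y3)`
and `(y5,y4)` given `y6` whenever the latter is nonzero. -/
theorem conditional_instrumental_variable_identity
    (gam1 gam2 lam2 lam13 lam23 lam5 : ℝ)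
    (Λ : Matrix (Fin 8) (Fin 8) ℝ)
    (hΛ : Λ = !![0, gam1, gam2, 0, 0,    0,     0, 0;
                 0, 0,    0,    1, lam2, lam13, 0, 0;
                 0, 0,    0,    0, 0,    lam23, 1, lam5;
                 0, 0,    0,    0, 0,    0,     0, 0;
                 0, 0,    0,    0, 0,    0,     0, 0;
                 0, 0,    0,    0, 0,    0,     0, 0;
                 0, 0,    0,    0, 0,    0,     0, 0;
                 0, 0,    0,    0, 0,    0,     0, 0])
    (Φ : Matrix (Fin 8) (Fin 8) ℝ) (hΦpd : Φ.PosDef)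
    (hΦoff : ∀ j k : Fin 8, j ≠ k →
      ¬ ((j = 3 ∧ k = 4) ∨ (j = 4 ∧ k = 3)) → Φ j k = 0) :
    (((((1 - Λ)⁻¹)ᵀ * Φ * (1 - Λ)⁻¹ : Matrix (Fin 8) (Fin 8) ℝ)) 0 0 *
        ((((1 - Λ)⁻¹)ᵀ * Φ * (1 - Λ)⁻¹ : Matrix (Fin 8) (Fin 8) ℝ)) 7 5 -
      ((((1 - Λ)⁻¹)ᵀ * Φ * (1 - Λ)⁻¹ : Matrix (Fin 8) (Fin 8) ℝ)) 7 0 *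
        ((((1 - Λ)⁻¹)ᵀ * Φ * (1 - Λ)⁻¹ : Matrix (Fin 8) (Fin 8) ℝ)) 0 5 =
      lam23 *
        (((((1 - Λ)⁻¹)ᵀ * Φ * (1 - Λ)⁻¹ : Matrix (Fin 8) (Fin 8) ℝ)) 0 0 *
            ((((1 - Λ)⁻¹)ᵀ * Φ * (1 - Λ)⁻¹ : Matrix (Fin 8) (Fin 8) ℝ)) 7 6 -
          ((((1 - Λ)⁻¹)ᵀ * Φ * (1 - Λ)⁻¹ : Matrix (Fin 8) (Fin 8) ℝ)) 7 0 *
            ((((1 - Λ)⁻¹)ᵀ * Φ * (1 - Λ)⁻¹ : Matrix (Fin 8) (Fin 8) ℝ)) 0 6)) ∧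
    (((((1 - Λ)⁻¹)ᵀ * Φ * (1 - Λ)⁻¹ : Matrix (Fin 8) (Fin 8) ℝ)) 7 6 -
        ((((1 - Λ)⁻¹)ᵀ * Φ * (1 - Λ)⁻¹ : Matrix (Fin 8) (Fin 8) ℝ)) 7 0 *
          ((((1 - Λ)⁻¹)ᵀ * Φ * (1 - Λ)⁻¹ : Matrix (Fin 8) (Fin 8) ℝ)) 0 6 /
          ((((1 - Λ)⁻¹)ᵀ * Φ * (1 - Λ)⁻¹ : Matrix (Fin 8) (Fin 8) ℝ)) 0 0 ≠ 0 →
      lam23 =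
        (((((1 - Λ)⁻¹)ᵀ * Φ * (1 - Λ)⁻¹ : Matrix (Fin 8) (Fin 8) ℝ)) 7 5 -
            ((((1 - Λ)⁻¹)ᵀ * Φ * (1 - Λ)⁻¹ : Matrix (Fin 8) (Fin 8) ℝ)) 7 0 *
              ((((1 - Λ)⁻¹)ᵀ * Φ * (1 - Λ)⁻¹ : Matrix (Fin 8) (Fin 8) ℝ)) 0 5 /
              ((((1 - Λ)⁻¹)ᵀ * Φ * (1 - Λ)⁻¹ : Matrix (Fin 8) (Fin 8) ℝ)) 0 0) /
          (((((1 - Λ)⁻¹)ᵀ * Φ * (1 - Λ)⁻¹ : Matrix (Fin 8) (Fin 8) ℝ)) 7 6 -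
            ((((1 - Λ)⁻¹)ᵀ * Φ * (1 - Λ)⁻¹ : Matrix (Fin 8) (Fin 8) ℝ)) 7 0 *
              ((((1 - Λ)⁻¹)ᵀ * Φ * (1 - Λ)⁻¹ : Matrix (Fin 8) (Fin 8) ℝ)) 0 6 /
              ((((1 - Λ)⁻¹)ᵀ * Φ * (1 - Λ)⁻¹ : Matrix (Fin 8) (Fin 8) ℝ)) 0 0)) := by
  -- y6, l2, y5, y4, l1, y1, y2, y3 is a topological order with y3, y4 and l1 after y5
  have hΛstrict : Λ.IsStrictBlockTriangular (![0, 4, 1, 5, 6, 7, 3, 2] : Fin 8 → ℕ) := by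
    intro i j hij
    subst hΛ
    fin_cases i <;> fin_cases j <;> simp_all
  have hΛunit : IsUnit (1 - Λ).det := by rw [hΛstrict.det_one_sub]; exact isUnit_one
  have hB := hΛstrict.blockTriangular_inv_one_sub
  have hrec (v : Fin 8) (h3 : v ≠ 3) (h4 : v ≠ 4) (ha : (1 - Λ)⁻¹ v 7 = 0)
      (hc : (1 - Λ)⁻¹ v 0 = 0) :
      partialCov (impliedCov Λ Φ) 0 7 v = ∑ u, Λ u v * partialCov (impliedCov Λ Φ) 0 7 u :=
    partialCov_impliedCov_eq_sum hΛunit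
      (fun j hj => hΦoff j v hj (by rintro (⟨-, rfl⟩ | ⟨-, rfl⟩) <;> contradiction)) ha hc
  have hl1 : partialCov (impliedCov Λ Φ) 0 7 1 = 0 := by
    rw [hrec 1 (by decide) (by decide) (hB (by decide)) (hB (by decide))]
    simp [Fin.sum_univ_eight, hΛ, partialCov_self_right]
  have hy3 : partialCov (impliedCov Λ Φ) 0 7 5 =
      lam13 * partialCov (impliedCov Λ Φ) 0 7 1 + lam23 * partialCov (impliedCov Λ Φ) 0 7 2 := by
    rw [hrec 5 (by decide) (by decide) (hB (by decide)) (hB (by decide))]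
    simp [Fin.sum_univ_eight, hΛ]
  have hy4 : partialCov (impliedCov Λ Φ) 0 7 6 = partialCov (impliedCov Λ Φ) 0 7 2 := by
    rw [hrec 6 (by decide) (by decide) (hB (by decide)) (hB (by decide))]
    simp [Fin.sum_univ_eight, hΛ]
  have hkey : partialCov (impliedCov Λ Φ) 0 7 5 = lam23 * partialCov (impliedCov Λ Φ) 0 7 6 := by
    rw [hy3, hy4, hl1]; ring
  exact ⟨hkey, eq_div_condCov_of_partialCov_eq
    (impliedCov_posDef hΦpd hΛunit).diag_pos.ne' hkey⟩
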